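/- arXiv:math/0607540 — 2 statements merged into one kernel-verified Lean document; each statement's English description precedes it below -/
import Mathlib

section
/- Let N ≥ 3, v, v_* ∈ ℝ^N with v ≠ v_*, and θ ∈ [0, π/2]. For a unit vector u orthogonal to v − v_*, let v'(u) = cos²(θ/2) v + sin²(θ/2) v_* + cos(θ/2) sin(θ/2) |v−v_*| u. Then for every α ≥ 1 there is a constant C_α > 0 depending only on α and N such that | ∫_{u ∈ S^{N−2}} [ ⟨v'(u)⟩^{2α} − ⟨v⟩^{2α} ] du | ≤ C_α sin(θ/2) ⟨v⟩^{2α} ⟨v_*⟩^{2α}, where the integral is over the unit sphere S^{N−2} of the hyperplane orthogonal to (v−v_*)/|v−v_*|. -/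
open MeasureTheory Real Set
open scoped InnerProductSpace

noncomputable section

/-- `ℝ^N` as a Euclidean space. -/
abbrev V (N : ℕ) : Type := EuclideanSpace ℝ (Fin N)

/-- The surface measure on the unit sphere of `ℝ^n`. -/
def sphVol (n : ℕ) : Measure (Metric.sphere (0 : EuclideanSpace ℝ (Fin n)) 1) :=
  (volume : Measure (EuclideanSpace ℝ (Fin n))).toSphere

/-- `⟨v⟩ = (1+|v|²)^{1/2}`. -/
def jap {N : ℕ} (v : V N) : ℝ := Real.sqrt (1 + ‖v‖ ^ 2)

/-- The post-collisional velocity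
`v'(u) = cos²(θ/2) v + sin²(θ/2) v_* + cos(θ/2) sin(θ/2) |v-v_*| u`. -/
def vPu {N : ℕ} (v vs : V N) (θ : ℝ) (u : V N) : V N :=
  (Real.cos (θ / 2) ^ 2) • v + (Real.sin (θ / 2) ^ 2) • vs +
    (Real.cos (θ / 2) * Real.sin (θ / 2) * ‖v - vs‖) • u

lemma one_le_jap {N : ℕ} (v : V N) : 1 ≤ jap v := by
  rw [jap]
  have : (1:ℝ) = Real.sqrt 1 := (Real.sqrt_one).symm
  rw [this]
  exact Real.sqrt_le_sqrt (by nlinarith [sq_nonneg ‖v‖])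

lemma jap_nonneg {N : ℕ} (v : V N) : 0 ≤ jap v := le_trans zero_le_one (one_le_jap v)

lemma norm_le_jap {N : ℕ} (v : V N) : ‖v‖ ≤ jap v := by
  rw [jap]
  have h : ‖v‖ = Real.sqrt (‖v‖ ^ 2) := (Real.sqrt_sq (norm_nonneg v)).symm
  rw [h]
  exact Real.sqrt_le_sqrt (by nlinarith [norm_nonneg v])

lemma jap_le_add {N : ℕ} (a b : V N) : jap a ≤ jap b + ‖a - b‖ := by
  set x := ‖a‖ with hx
  set y := ‖b‖ with hy
  set d := ‖a - b‖ with hd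
  have hx0 : 0 ≤ x := norm_nonneg a
  have hy0 : 0 ≤ y := norm_nonneg b
  have hd0 : 0 ≤ d := norm_nonneg _
  have hxy : x ≤ y + d := by
    have h := norm_sub_norm_le a b
    rw [← hx, ← hy, ← hd] at h
    linarith
  set S := Real.sqrt (1 + y ^ 2) with hS
  have hS0 : 0 ≤ S := Real.sqrt_nonneg _
  have hS2 : S ^ 2 = 1 + y ^ 2 := Real.sq_sqrt (by positivity)
  have hyS : y ≤ S := by nlinarith
  have key : 1 + x ^ 2 ≤ (S + d) ^ 2 := by nlinarith
  have : jap a ≤ Real.sqrt ((S + d) ^ 2) := Real.sqrt_le_sqrt key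
  rwa [Real.sqrt_sq (by positivity)] at this

lemma abs_jap_sub {N : ℕ} (a b : V N) : |jap a - jap b| ≤ ‖a - b‖ := by
  rw [abs_sub_le_iff]
  constructor
  · have := jap_le_add a b; linarith
  · have := jap_le_add b a; rw [norm_sub_rev] at this; linarith

lemma rpow_sub_rpow_le {A B M p : ℝ} (hB : 1 ≤ B) (hBA : B ≤ A) (hAM : A ≤ M)
    (hp : 1 ≤ p) : A ^ p - B ^ p ≤ p * M ^ (p - 1) * (A - B) := by
  have hA0 : (0:ℝ) < A := lt_of_lt_of_le one_pos (hB.trans hBA)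
  have hB0 : (0:ℝ) < B := lt_of_lt_of_le one_pos hB
  set y := B / A with hy
  have hy0 : 0 < y := div_pos hB0 hA0
  have hBy : A * y = B := by rw [hy, mul_div_assoc', mul_div_cancel_left₀ B (ne_of_gt hA0)]
  have bern : 1 + p * (y - 1) ≤ y ^ p := by
    have := one_add_mul_self_le_rpow_one_add (s := y - 1) (by linarith) hp
    simpa using this
  have hBp : B ^ p = A ^ p * y ^ p := by
    rw [← hBy, Real.mul_rpow hA0.le hy0.le]
  have hApos : 0 < A ^ p := Real.rpow_pos_of_pos hA0 p
  have hApm : A ^ p = A ^ (p - 1) * A := by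
    rw [← Real.rpow_add_one (ne_of_gt hA0) (p - 1), sub_add_cancel]
  have hMle : A ^ (p - 1) ≤ M ^ (p - 1) :=
    Real.rpow_le_rpow hA0.le hAM (by linarith)
  have step1 : A ^ p - B ^ p ≤ A ^ p * (p * (1 - y)) := by
    rw [hBp]
    have : A ^ p * (1 - y ^ p) ≤ A ^ p * (p * (1 - y)) :=
      mul_le_mul_of_nonneg_left (by nlinarith) hApos.le
    linarith [this]
  have step2 : A ^ p * (p * (1 - y)) = p * A ^ (p - 1) * (A - B) := by
    rw [hApm, ← hBy]; ring
  have hAB : 0 ≤ A - B := by linarith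
  have hp0 : 0 ≤ p := by linarith
  calc A ^ p - B ^ p ≤ p * A ^ (p - 1) * (A - B) := by rw [← step2]; exact step1
    _ ≤ p * M ^ (p - 1) * (A - B) := by
        apply mul_le_mul_of_nonneg_right _ hAB
        exact mul_le_mul_of_nonneg_left hMle hp0

lemma abs_rpow_sub_rpow_le {A B M p : ℝ} (hA : 1 ≤ A) (hB : 1 ≤ B) (hAM : A ≤ M)
    (hBM : B ≤ M) (hp : 1 ≤ p) : |A ^ p - B ^ p| ≤ p * M ^ (p - 1) * |A - B| := by
  rcases le_total B A with h | h
  · have h1 : B ^ p ≤ A ^ p := Real.rpow_le_rpow (by linarith) h (by linarith)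
    rw [abs_of_nonneg (by linarith), abs_of_nonneg (by linarith)]
    exact rpow_sub_rpow_le hB h hAM hp
  · have h1 : A ^ p ≤ B ^ p := Real.rpow_le_rpow (by linarith) h (by linarith)
    rw [abs_sub_comm, abs_sub_comm A B, abs_of_nonneg (by linarith),
      abs_of_nonneg (by linarith)]
    exact rpow_sub_rpow_le hA h hBM hp

set_option maxHeartbeats 1000000 in
/-- first part of Lemma 1 of the paper.  For `α ≥ 1`, there is `C_α > 0`
depending only on `α` and `N` such that for all `v ≠ v_*`, `θ ∈ [0,π/2]`, the integral
over the unit sphere `S^{N-2}` of the hyperplane orthogonal to `v - v_*` (parametrized by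
any linear isometry `e : ℝ^{N-1} → ℝ^N` onto this hyperplane) satisfies
`|∫_{S^{N-2}} [⟨v'(u)⟩^{2α} - ⟨v⟩^{2α}] du| ≤ C_α sin(θ/2) ⟨v⟩^{2α} ⟨v_*⟩^{2α}`. -/
theorem cancellation_lemma_first_order
    (N : ℕ) (hN : 3 ≤ N) (α : ℝ) (hα : 1 ≤ α) :
    ∃ C : ℝ, 0 < C ∧
      ∀ (v vs : V N), v ≠ vs → ∀ θ ∈ Set.Icc (0 : ℝ) (π / 2),
        ∀ e : EuclideanSpace ℝ (Fin (N - 1)) →ₗᵢ[ℝ] V N,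
          Set.range e = ((Submodule.span ℝ {v - vs})ᗮ : Set (V N)) →
          |∫ u : Metric.sphere (0 : EuclideanSpace ℝ (Fin (N - 1))) 1,
              (jap (vPu v vs θ (e (u : EuclideanSpace ℝ (Fin (N - 1))))) ^ (2 * α)
                - jap v ^ (2 * α)) ∂(sphVol (N - 1))|
            ≤ C * Real.sin (θ / 2) * jap v ^ (2 * α) * jap vs ^ (2 * α) := by
  have hp1 : 1 ≤ 2 * α := by linarith
  set p : ℝ := 2 * α with hpdef
  set m : ℝ := ((sphVol (N - 1)) Set.univ).toReal with hm
  have hm0 : 0 ≤ m := ENNReal.toReal_nonneg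
  set K : ℝ := 4 * p * 5 ^ (p - 1) with hK
  have hK0 : 0 < K := by
    have : (0:ℝ) < (5:ℝ) ^ (p - 1) := Real.rpow_pos_of_pos (by norm_num) _
    have hp0 : (0:ℝ) < p := by linarith
    positivity
  refine ⟨K * m + 1, by positivity, ?_⟩
  intro v vs hvvs θ hθ e he
  obtain ⟨hθ0, hθπ⟩ := hθ
  set s := Real.sin (θ / 2) with hs
  set c := Real.cos (θ / 2) with hc
  have hs0 : 0 ≤ s := Real.sin_nonneg_of_nonneg_of_le_pi (by linarith)
    (by linarith [Real.pi_pos])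
  have hs1 : s ≤ 1 := Real.sin_le_one _
  have hc0 : 0 ≤ c := Real.cos_nonneg_of_mem_Icc ⟨by linarith [Real.pi_pos], by linarith⟩
  have hc1 : c ≤ 1 := Real.cos_le_one _
  have hcs : c ^ 2 = 1 - s ^ 2 := by nlinarith [Real.sin_sq_add_cos_sq (θ / 2)]
  set J : ℝ := jap v * jap vs with hJ
  have hJ1 : 1 ≤ J := by nlinarith [one_le_jap v, one_le_jap vs]
  have hJ0 : (0:ℝ) < J := by linarith
  have hJne : J ≠ 0 := ne_of_gt hJ0
  have hpt : ∀ u : Metric.sphere (0 : EuclideanSpace ℝ (Fin (N - 1))) 1,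
      ‖jap (vPu v vs θ (e (u : EuclideanSpace ℝ (Fin (N - 1))))) ^ p - jap v ^ p‖
        ≤ K * s * (jap v ^ p * jap vs ^ p) := by
    intro u
    set w : V N := e (u : EuclideanSpace ℝ (Fin (N - 1))) with hw
    have hwnorm : ‖w‖ = 1 := by
      rw [hw, e.norm_map]
      exact mem_sphere_zero_iff_norm.mp u.2
    set d := ‖v - vs‖ with hd
    have hd0 : 0 ≤ d := norm_nonneg _
    have hdle : d ≤ jap v + jap vs :=
      le_trans (norm_sub_le v vs) (add_le_add (norm_le_jap v) (norm_le_jap vs))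
    have hdJ : d ≤ 2 * J := by nlinarith [one_le_jap v, one_le_jap vs]
    have hdiff : vPu v vs θ w - v = (s ^ 2) • (vs - v) + (c * s * d) • w := by
      simp only [vPu, ← hc, ← hs, ← hd]
      rw [hcs]
      module
    have hnd : ‖vPu v vs θ w - v‖ ≤ 4 * s * J := by
      rw [hdiff]
      have h1 : ‖(s ^ 2) • (vs - v) + (c * s * d) • w‖
          ≤ s ^ 2 * d + c * s * d := by
        calc ‖(s ^ 2) • (vs - v) + (c * s * d) • w‖
            ≤ ‖(s ^ 2) • (vs - v)‖ + ‖(c * s * d) • w‖ := norm_add_le _ _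
          _ = s ^ 2 * d + c * s * d := by
              rw [norm_smul, norm_smul, hwnorm, Real.norm_eq_abs, Real.norm_eq_abs,
                abs_of_nonneg (by positivity), abs_of_nonneg (by positivity),
                norm_sub_rev, ← hd]
              ring
      have h2 : s ^ 2 * d + c * s * d ≤ 4 * s * J := by
        nlinarith [mul_nonneg hs0 hd0, mul_le_mul_of_nonneg_left hdJ hs0,
          mul_nonneg (mul_nonneg hs0 hs0) hd0]
      linarith
    set A := jap (vPu v vs θ w) with hA
    set B := jap v with hB
    have hABd : |A - B| ≤ 4 * s * J := le_trans (abs_jap_sub _ _) hnd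
    have hBJ : B ≤ J := by nlinarith [one_le_jap vs, jap_nonneg v]
    have hAM : A ≤ 5 * J := by
      have h := jap_le_add (vPu v vs θ w) v
      nlinarith [h, hnd]
    have hBM : B ≤ 5 * J := by linarith
    have hmain : |A ^ p - B ^ p| ≤ p * (5 * J) ^ (p - 1) * |A - B| :=
      abs_rpow_sub_rpow_le (one_le_jap _) (one_le_jap v) hAM hBM hp1
    have hcoef : 0 ≤ p * (5 * J) ^ (p - 1) := by
      have := Real.rpow_nonneg (by linarith : (0:ℝ) ≤ 5 * J) (p - 1)
      nlinarith
    have hmain2 : |A ^ p - B ^ p| ≤ p * (5 * J) ^ (p - 1) * (4 * s * J) :=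
      le_trans hmain (mul_le_mul_of_nonneg_left hABd hcoef)
    have h1 : (5 * J) ^ (p - 1) = 5 ^ (p - 1) * J ^ (p - 1) :=
      Real.mul_rpow (by norm_num) (by linarith)
    have hpe : p - 1 + 1 = p := by ring
    have h2 : J ^ (p - 1) * J = J ^ p := by
      rw [← Real.rpow_add_one hJne (p - 1), hpe]
    have h3 : J ^ p = jap v ^ p * jap vs ^ p :=
      Real.mul_rpow (jap_nonneg v) (jap_nonneg vs)
    have hfin : p * (5 * J) ^ (p - 1) * (4 * s * J) = K * s * (jap v ^ p * jap vs ^ p) := by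
      rw [h1, ← h3, ← h2, hK]; ring
    rw [Real.norm_eq_abs]
    rw [hfin] at hmain2
    exact hmain2
  have hfm : IsFiniteMeasure (sphVol (N - 1)) := by unfold sphVol; infer_instance
  have hint : ‖∫ u : Metric.sphere (0 : EuclideanSpace ℝ (Fin (N - 1))) 1,
      (jap (vPu v vs θ (e (u : EuclideanSpace ℝ (Fin (N - 1))))) ^ p - jap v ^ p)
        ∂(sphVol (N - 1))‖ ≤ K * s * (jap v ^ p * jap vs ^ p) * m := by
    exact norm_integral_le_of_norm_le_const (Filter.Eventually.of_forall hpt)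
  rw [← Real.norm_eq_abs]
  refine le_trans hint ?_
  have hXv : 0 ≤ jap v ^ p := Real.rpow_nonneg (jap_nonneg v) p
  have hXvs : 0 ≤ jap vs ^ p := Real.rpow_nonneg (jap_nonneg vs) p
  nlinarith [mul_nonneg (mul_nonneg hs0 hXv) hXvs, hK0.le, hm0,
    mul_nonneg (mul_nonneg (mul_nonneg hs0 hXv) hXvs) hm0]
end
end

section
/- Let K, C, δ > 0 and let y : (0,T] → (0,∞) be a differentiable function satisfying y'(t) ≤ −K y(t)^{1+δ} + C y(t) for all t ∈ (0,T]. Then for every t ∈ (0,T]: y(t) ≤ [ C / ( K (1 − e^{−Cδt}) ) ]^{1/δ}. In particular y(t) is finite for every t > 0 regardless of the size of y near 0. -/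
open Real Set

/-- comparison with the Bernoulli equation `y' = -K y^{1+δ} + C y`.
If `y : (0,T] → (0,∞)` is differentiable and satisfies `y' ≤ -K y^{1+δ} + C y`,
then `y(t) ≤ [C/(K(1 - e^{-Cδt}))]^{1/δ}` on `(0,T]`, regardless of the size of `y`
near `0`. -/
theorem bernoulli_comparison
    (K C δ T : ℝ) (hK : 0 < K) (hC : 0 < C) (hδ : 0 < δ) (hT : 0 < T)
    (y y' : ℝ → ℝ)
    (hy_pos : ∀ t ∈ Set.Ioc (0 : ℝ) T, 0 < y t)
    (hy_deriv : ∀ t ∈ Set.Ioc (0 : ℝ) T, HasDerivAt y (y' t) t)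
    (hy_le : ∀ t ∈ Set.Ioc (0 : ℝ) T, y' t ≤ -K * y t ^ (1 + δ) + C * y t) :
    ∀ t ∈ Set.Ioc (0 : ℝ) T,
      y t ≤ (C / (K * (1 - Real.exp (-(C * δ * t))))) ^ (1 / δ) := by
  intro t ht
  obtain ⟨ht0, htT⟩ := ht
  set g : ℝ → ℝ := fun u => Real.exp (C * δ * u) * (y u ^ (-δ) - K / C) with hg_def
  set g' : ℝ → ℝ := fun u =>
    C * δ * Real.exp (C * δ * u) * (y u ^ (-δ) - K / C) +
      Real.exp (C * δ * u) * (y' u * (-δ) * y u ^ (-δ - 1)) with hg'_def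
  have hgderiv : ∀ u ∈ Set.Ioc (0 : ℝ) T, HasDerivAt g (g' u) u := by
    intro u hu
    have h1 : HasDerivAt (fun u : ℝ => Real.exp (C * δ * u)) (C * δ * Real.exp (C * δ * u)) u := by
      have := ((hasDerivAt_id u).const_mul (C * δ)).exp
      simpa [mul_comm] using this
    have h2 : HasDerivAt (fun u => y u ^ (-δ) - K / C)
        (y' u * (-δ) * y u ^ (-δ - 1)) u :=
      ((hy_deriv u hu).rpow_const (Or.inl (hy_pos u hu).ne')).sub_const (K / C)
    simpa [hg_def, hg'_def, Pi.mul_def, mul_comm, mul_left_comm, mul_assoc] using h1.mul h2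
  have hg'_nonneg : ∀ u ∈ Set.Ioc (0 : ℝ) T, 0 ≤ g' u := by
    intro u hu
    have hyu := hy_pos u hu
    have hE : (0 : ℝ) < Real.exp (C * δ * u) := Real.exp_pos _
    have key : -(y' u * δ * y u ^ (-δ - 1)) ≥ K * δ - C * δ * y u ^ (-δ) := by
      have h1 : y u ^ (-δ - 1) * y u ^ (1 + δ) = 1 := by
        rw [← Real.rpow_add hyu]
        rw [show -δ - 1 + (1 + δ) = 0 by ring, Real.rpow_zero]
      have h2 : y u ^ (-δ - 1) * y u = y u ^ (-δ) := by
        nth_rewrite 2 [← Real.rpow_one (y u)]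
        rw [← Real.rpow_add hyu]
        rw [show -δ - 1 + 1 = -δ by ring]
      have hpow : (0 : ℝ) < y u ^ (-δ - 1) := Real.rpow_pos_of_pos hyu _
      have hmul := mul_le_mul_of_nonneg_right (hy_le u hu)
        (le_of_lt (mul_pos hδ hpow))
      have hrhs : (-K * y u ^ (1 + δ) + C * y u) * (δ * y u ^ (-δ - 1))
          = -(K * δ) + C * δ * y u ^ (-δ) := by
        linear_combination (-(K * δ)) * h1 + (C * δ) * h2
      nlinarith [hmul, hrhs]
    have hgu : g' u = C * δ * Real.exp (C * δ * u) * (y u ^ (-δ) - K / C) +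
        Real.exp (C * δ * u) * (y' u * (-δ) * y u ^ (-δ - 1)) := rfl
    rw [hgu]
    have hid : C * δ * Real.exp (C * δ * u) * (y u ^ (-δ) - K / C)
        = Real.exp (C * δ * u) * (C * δ * y u ^ (-δ) - K * δ) := by
      field_simp
    rw [hid]
    have hmul := mul_le_mul_of_nonneg_left key (le_of_lt hE)
    nlinarith [hmul]
  -- monotonicity of g on [s,t] for s ∈ (0,t)
  have hmono : ∀ s ∈ Set.Ioo (0 : ℝ) t, g s ≤ g t := by
    intro s hs
    have hsub : Set.Icc s t ⊆ Set.Ioc (0 : ℝ) T := fun u hu =>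
      ⟨lt_of_lt_of_le hs.1 hu.1, le_trans hu.2 htT⟩
    have hmono : MonotoneOn g (Set.Icc s t) := by
      apply monotoneOn_of_deriv_nonneg (convex_Icc s t)
      · intro u hu
        exact (hgderiv u (hsub hu)).continuousAt.continuousWithinAt
      · intro u hu
        rw [interior_Icc] at hu
        exact (hgderiv u (hsub (Set.Ioo_subset_Icc_self hu))).differentiableAt.differentiableWithinAt
      · intro u hu
        rw [interior_Icc] at hu
        rw [(hgderiv u (hsub (Set.Ioo_subset_Icc_self hu))).deriv]
        exact hg'_nonneg u (hsub (Set.Ioo_subset_Icc_self hu))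
    exact hmono (Set.left_mem_Icc.mpr hs.2.le) (Set.right_mem_Icc.mpr hs.2.le) hs.2.le
  -- lower bound for z t = y t ^ (-δ)
  have hzt : K / C * (1 - Real.exp (-(C * δ * t))) ≤ y t ^ (-δ) := by
    have hbound : ∀ s ∈ Set.Ioo (0 : ℝ) t,
        K / C * (1 - Real.exp (C * δ * (s - t))) ≤ y t ^ (-δ) := by
      intro s hs
      have hgs : -(K / C) * Real.exp (C * δ * s) ≤ g s := by
        have hys : 0 < y s ^ (-δ) :=
          Real.rpow_pos_of_pos (hy_pos s ⟨hs.1, le_trans hs.2.le htT⟩) _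
        have hE : (0 : ℝ) < Real.exp (C * δ * s) := Real.exp_pos _
        simp only [hg_def]
        nlinarith
      have h := le_trans hgs (hmono s hs)
      have hEt : (0 : ℝ) < Real.exp (C * δ * t) := Real.exp_pos _
      have hexp : Real.exp (C * δ * (s - t)) = Real.exp (C * δ * s) / Real.exp (C * δ * t) := by
        rw [← Real.exp_sub]; ring_nf
      simp only [hg_def] at h
      rw [hexp]
      have hq : K / C * (1 - Real.exp (C * δ * s) / Real.exp (C * δ * t))
          = K / C * (Real.exp (C * δ * t) - Real.exp (C * δ * s)) / Real.exp (C * δ * t) := by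
        field_simp
      rw [hq, div_le_iff₀ hEt]
      nlinarith [h]
    have htend : Filter.Tendsto (fun s => K / C * (1 - Real.exp (C * δ * (s - t))))
        (nhdsWithin 0 (Set.Ioi 0)) (nhds (K / C * (1 - Real.exp (-(C * δ * t))))) := by
      have : Continuous (fun s : ℝ => K / C * (1 - Real.exp (C * δ * (s - t)))) := by
        continuity
      have h0 := this.tendsto 0
      simp only [zero_sub, mul_neg] at h0
      exact h0.mono_left nhdsWithin_le_nhds
    refine le_of_tendsto htend ?_
    filter_upwards [Ioo_mem_nhdsGT ht0] with s hs using hbound s hs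
  -- conclude
  have hApos : 0 < K / C * (1 - Real.exp (-(C * δ * t))) := by
    have h1 : Real.exp (-(C * δ * t)) < 1 := by
      rw [Real.exp_lt_one_iff]
      have : 0 < C * δ * t := by positivity
      linarith
    exact mul_pos (div_pos hK hC) (sub_pos.mpr h1)
  have hyt := hy_pos t ⟨ht0, htT⟩
  set A := K / C * (1 - Real.exp (-(C * δ * t))) with hA_def
  have h1 : (y t ^ (-δ)) ^ (-(1 / δ)) = y t := by
    rw [← Real.rpow_mul hyt.le]
    rw [show -δ * -(1 / δ) = 1 by field_simp]
    exact Real.rpow_one _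
  have h2 : (y t ^ (-δ)) ^ (-(1 / δ)) ≤ A ^ (-(1 / δ)) :=
    Real.rpow_le_rpow_of_nonpos hApos hzt (neg_nonpos.mpr (by positivity))
  have h3 : A ^ (-(1 / δ)) = (C / (K * (1 - Real.exp (-(C * δ * t))))) ^ (1 / δ) := by
    rw [Real.rpow_neg hApos.le, ← Real.inv_rpow hApos.le]
    congr 1
    rw [hA_def]
    field_simp
  rw [← h1, ← h3]
  exact h2
end
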